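/- In the Heisenberg group 𝔥 = ℝ³, let d be the sub-Riemannian distance and let d_F be the Finsler distance associated with the norm ‖u‖ := √(u₁²+u₂²) + |u₃|. Then there exists r₀ > 0 such that d_F(p,q) = d(p,q) for every p, q ∈ ℝ³ with d(p,q) ≥ r₀. -/

import Mathlib

open MeasureTheory

/-- The Heisenberg group modeled on `ℝ³`. -/
abbrev Heis : Type := ℝ × ℝ × ℝ

/-- The Heisenberg Lie bracket `⁅(a,b,c),(a',b',c')⁆ = (0,0,ab'−a'b)`. -/
def hbracket (x y : Heis) : Heis := (0, 0, x.1 * y.2.1 - y.1 * x.2.1)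

/-- The Heisenberg group product `x∗y = x + y + (1/2)⁅x,y⁆`. -/
noncomputable def hmul (x y : Heis) : Heis := x + y + (2⁻¹ : ℝ) • hbracket x y

/-- The endpoint `E(u) = ∫₀¹ u + (1/2)∫₀¹ ⁅∫₀ᵗ u, u(t)⁆ dt` of the curve with control `u`. -/
noncomputable def hEndpoint (u : ℝ → Heis) : Heis :=
  (∫ t in (0:ℝ)..1, u t) +
    (2⁻¹ : ℝ) • ∫ t in (0:ℝ)..1, hbracket (∫ s in (0:ℝ)..t, u s) (u t)

/-- The sub-Riemannian distance on the Heisenberg group: infimum of `∫₀¹ √(u₁²+u₂²)` over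
`L¹` controls `u` with `u₃ = 0` a.e. steering `p` to `q`. -/
noncomputable def dH (p q : Heis) : ℝ :=
  sInf {l : ℝ | ∃ u : ℝ → Heis, IntervalIntegrable u volume 0 1 ∧
    (∀ᵐ t ∂(volume.restrict (Set.Icc (0:ℝ) 1)), (u t).2.2 = 0) ∧
    hEndpoint u = hmul (-p) q ∧
    l = ∫ t in (0:ℝ)..1, Real.sqrt ((u t).1 ^ 2 + (u t).2.1 ^ 2)}

/-- The Finsler distance associated with a norm `nrm` on `ℝ³`: infimum of `∫₀¹ nrm (u t)`
over `L¹` controls `u` steering `p` to `q`. -/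
noncomputable def dFin (nrm : Heis → ℝ) (p q : Heis) : ℝ :=
  sInf {l : ℝ | ∃ u : ℝ → Heis, IntervalIntegrable u volume 0 1 ∧
    hEndpoint u = hmul (-p) q ∧
    l = ∫ t in (0:ℝ)..1, nrm (u t)}


/-!
Horizontal controls are admissible for `d_F` and cost the same there, so `d_F ≤ d`. Conversely,
let `u` be any control, `v` its horizontal part, `ℓ` the length of `v` and `h = ∫ u₃`; the endpoint
of `u` is that of `v` moved by `h` along the centre, and `|h| ≤ ∫ |u₃|`.

If the planar trace of `v` reaches radius `R ≥ 2` at some time `τ`, rotate the piece of `v`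
before `τ` by the angle `-2h/R²` about the origin and then return along the circle of radius `R`
about the origin: this adds exactly the area `h` at the extra length `2|h|/R ≤ |h|`.

Otherwise the trace stays in the disc of radius `2`, so the enclosed area is at most `ℓ`: the
endpoint has planar part of size `< 2` and central part at most `s = ℓ + ∫ |u₃|`. Going straight
and then once around a circle of the right area gives `d ≤ 2 + √(4πs)`, and this forces `d ≤ s`
once `d ≥ 100`.
-/

open Set intervalIntegral Real
open scoped Interval

section IntervalIntegralProd

variable {E F : Type*} [NormedAddCommGroup E] [NormedAddCommGroup F] [NormedSpace ℝ E]
  [NormedSpace ℝ F] {a b : ℝ} {μ : Measure ℝ}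

protected lemma IntervalIntegrable.fst {f : ℝ → E × F} (h : IntervalIntegrable f μ a b) :
    IntervalIntegrable (fun t => (f t).1) μ a b :=
  ⟨h.1.fst, h.2.fst⟩

protected lemma IntervalIntegrable.snd {f : ℝ → E × F} (h : IntervalIntegrable f μ a b) :
    IntervalIntegrable (fun t => (f t).2) μ a b :=
  ⟨h.1.snd, h.2.snd⟩

variable [CompleteSpace E] [CompleteSpace F]

lemma intervalIntegral.fst_integral {f : ℝ → E × F} (h : IntervalIntegrable f μ a b) :
    (∫ t in a..b, f t ∂μ).1 = ∫ t in a..b, (f t).1 ∂μ :=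
  ((ContinuousLinearMap.fst ℝ E F).intervalIntegral_comp_comm h).symm

lemma intervalIntegral.snd_integral {f : ℝ → E × F} (h : IntervalIntegrable f μ a b) :
    (∫ t in a..b, f t ∂μ).2 = ∫ t in a..b, (f t).2 ∂μ :=
  ((ContinuousLinearMap.snd ℝ E F).intervalIntegral_comp_comm h).symm

end IntervalIntegralProd

lemma IntervalIntegrable.comp_mul_add {E : Type*} [NormedAddCommGroup E] {f : ℝ → E}
    {a b c d : ℝ} (hf : IntervalIntegrable f volume (c * a + d) (c * b + d)) :
    IntervalIntegrable (fun t => f (c * t + d)) volume a b := by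
  rcases eq_or_ne c 0 with rfl | hc
  · simp
  · simpa only [add_sub_cancel_right, mul_div_cancel_left₀ _ hc] using
      (hf.comp_add_right d).comp_mul_left (c := c)

namespace Heisenberg

/-! ### The symplectic form and rotations -/

def symp (x y : Heis) : ℝ := x.1 * y.2.1 - y.1 * x.2.1

def e₃ : Heis := (0, 0, 1)

noncomputable def hnorm (x : Heis) : ℝ := √(x.1 ^ 2 + x.2.1 ^ 2)

lemma hbracket_eq_symp_smul (x y : Heis) : hbracket x y = symp x y • e₃ := by
  simp [hbracket, symp, e₃]

lemma hmul_eq (x y : Heis) : hmul x y = x + y + (2⁻¹ * symp x y) • e₃ := by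
  rw [hmul, hbracket_eq_symp_smul, smul_smul]

@[simp] lemma symp_self (x : Heis) : symp x x = 0 := by
  simp [symp]

@[simp] lemma symp_add_smul_e₃_left (x y : Heis) (c : ℝ) : symp (x + c • e₃) y = symp x y := by
  simp [symp, e₃]

@[simp] lemma symp_add_smul_e₃_right (x y : Heis) (c : ℝ) : symp x (y + c • e₃) = symp x y := by
  simp [symp, e₃]

lemma symp_add_left (x x' y : Heis) : symp (x + x') y = symp x y + symp x' y := by
  simp only [symp, Prod.fst_add, Prod.snd_add]; ring

lemma symp_sub_right (x y y' : Heis) : symp x (y - y') = symp x y - symp x y' := by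
  simp only [symp, Prod.fst_sub, Prod.snd_sub]; ring

lemma symp_smul_left (c : ℝ) (x y : Heis) : symp (c • x) y = c * symp x y := by
  simp only [symp, Prod.smul_fst, Prod.smul_snd, smul_eq_mul]; ring

lemma symp_smul_right (c : ℝ) (x y : Heis) : symp x (c • y) = c * symp x y := by
  simp only [symp, Prod.smul_fst, Prod.smul_snd, smul_eq_mul]; ring

lemma hmul_add_smul_e₃ (x y : Heis) (c : ℝ) : hmul (x + c • e₃) y = hmul x y + c • e₃ := by
  simp only [hmul_eq, symp_add_smul_e₃_left]; abel

lemma hnorm_sq (x : Heis) : hnorm x ^ 2 = x.1 ^ 2 + x.2.1 ^ 2 :=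
  sq_sqrt (by positivity)

@[simp] lemma hnorm_add_smul_e₃ (x : Heis) (c : ℝ) : hnorm (x + c • e₃) = hnorm x := by
  simp [hnorm, e₃]

lemma hnorm_le_abs_add_abs (x : Heis) : hnorm x ≤ |x.1| + |x.2.1| :=
  sqrt_le_iff.2 ⟨by positivity,
    by nlinarith [sq_abs x.1, sq_abs x.2.1, abs_nonneg x.1, abs_nonneg x.2.1]⟩

lemma hnorm_nonneg (x : Heis) : 0 ≤ hnorm x := sqrt_nonneg _

lemma continuous_hnorm : Continuous hnorm := by
  unfold hnorm; fun_prop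

lemma hnorm_smul (c : ℝ) (x : Heis) : hnorm (c • x) = |c| * hnorm x := by
  rw [hnorm, hnorm, ← sqrt_sq_eq_abs, ← sqrt_mul (sq_nonneg c)]
  congr 1
  simp only [Prod.smul_fst, Prod.smul_snd, smul_eq_mul]; ring

lemma abs_symp_le (x y : Heis) : |symp x y| ≤ hnorm x * hnorm y := by
  rw [← sqrt_sq_eq_abs, hnorm, hnorm, ← sqrt_mul (by positivity)]
  exact sqrt_le_sqrt (by unfold symp; nlinarith [sq_nonneg (x.1 * y.1 + x.2.1 * y.2.1)])

noncomputable def rot (θ : ℝ) : Heis →L[ℝ] Heis :=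
  LinearMap.toContinuousLinearMap
    { toFun := fun x => (cos θ * x.1 - sin θ * x.2.1, sin θ * x.1 + cos θ * x.2.1, x.2.2)
      map_add' := fun x y => by ext <;> simp only [Prod.fst_add, Prod.snd_add] <;> ring
      map_smul' := fun c x => by
        ext <;> simp only [Prod.smul_fst, Prod.smul_snd, smul_eq_mul, RingHom.id_apply] <;> ring }

@[simp] lemma rot_apply (θ : ℝ) (x : Heis) :
    rot θ x = (cos θ * x.1 - sin θ * x.2.1, sin θ * x.1 + cos θ * x.2.1, x.2.2) := rfl

lemma rot_add_smul_e₃ (θ c : ℝ) (x : Heis) : rot θ (x + c • e₃) = rot θ x + c • e₃ := by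
  ext <;> simp [e₃]

lemma rot_rot_neg (θ : ℝ) (x : Heis) : rot θ (rot (-θ) x) = x := by
  have h := sin_sq_add_cos_sq θ
  refine Prod.ext ?_ (Prod.ext ?_ rfl) <;> simp only [rot_apply, cos_neg, sin_neg]
  · linear_combination x.1 * h
  · linear_combination x.2.1 * h

lemma symp_rot (θ : ℝ) (x y : Heis) : symp (rot θ x) (rot θ y) = symp x y := by
  simp only [symp, rot_apply]
  linear_combination (x.1 * y.2.1 - y.1 * x.2.1) * sin_sq_add_cos_sq θ

lemma symp_rot_self (θ : ℝ) (x : Heis) : symp (rot θ x) x = -(hnorm x ^ 2 * sin θ) := by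
  rw [hnorm_sq]; simp only [symp, rot_apply]; ring

lemma hnorm_rot (θ : ℝ) (x : Heis) : hnorm (rot θ x) = hnorm x := by
  simp only [hnorm, rot_apply]
  congr 1
  linear_combination (x.1 ^ 2 + x.2.1 ^ 2) * sin_sq_add_cos_sq θ

def perp (x : Heis) : Heis := (-x.2.1, x.1, 0)

lemma hnorm_perp (x : Heis) : hnorm (perp x) = hnorm x := by
  simp only [hnorm, perp]; ring_nf

/-! ### The endpoint map on an interval -/

noncomputable def endpointOn (u : ℝ → Heis) (a b : ℝ) : Heis :=
  (∫ t in a..b, u t) + (2⁻¹ * ∫ t in a..b, symp (∫ s in a..t, u s) (u t)) • e₃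

lemma hEndpoint_eq_endpointOn (u : ℝ → Heis) : hEndpoint u = endpointOn u 0 1 := by
  simp only [hEndpoint, endpointOn, hbracket_eq_symp_smul,
    intervalIntegral.integral_smul_const, smul_smul]

variable {u v : ℝ → Heis} {a b c : ℝ}

lemma _root_.IntervalIntegrable.hnorm (hu : IntervalIntegrable u volume a b) :
    IntervalIntegrable (fun t => hnorm (u t)) volume a b :=
  (hu.fst.abs.add hu.snd.fst.abs).mono_fun'
    (continuous_hnorm.comp_aestronglyMeasurable hu.aestronglyMeasurable_restrict_uIoc)
    (ae_of_all _ fun t => (Real.norm_of_nonneg (hnorm_nonneg _)).trans_le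
      (hnorm_le_abs_add_abs (u t)))

lemma integral_hnorm_comp_mul_add (u : ℝ → Heis) {c : ℝ} (hc : 0 ≤ c) (a b d : ℝ) :
    ∫ t in a..b, hnorm (c • u (c * t + d)) = ∫ t in c * a + d..c * b + d, hnorm (u t) := by
  have h (t : ℝ) : hnorm (c • u (c * t + d)) = c • hnorm (u (c * t + d)) := by
    rw [hnorm_smul, abs_of_nonneg hc, smul_eq_mul]
  simp only [h, intervalIntegral.integral_smul]
  exact smul_integral_comp_mul_add (fun t => hnorm (u t)) c d

lemma intervalIntegrable_symp {p : ℝ → Heis} (hu : IntervalIntegrable u volume a b)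
    (hp : ContinuousOn p [[a, b]]) :
    IntervalIntegrable (fun t => symp (p t) (u t)) volume a b :=
  (hu.snd.fst.continuousOn_mul hp.fst).sub (hu.fst.mul_continuousOn hp.snd.fst)

lemma intervalIntegrable_symp_primitive (hu : IntervalIntegrable u volume a b) :
    IntervalIntegrable (fun t => symp (∫ s in a..t, u s) (u t)) volume a b :=
  intervalIntegrable_symp hu (continuousOn_primitive_interval' hu left_mem_uIcc)

lemma integral_symp_right (x : Heis) (hu : IntervalIntegrable u volume a b) :
    ∫ t in a..b, symp x (u t) = symp x (∫ t in a..b, u t) := by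
  simp only [symp]
  rw [integral_sub (hu.snd.fst.const_mul _) (hu.fst.mul_const _),
    intervalIntegral.integral_const_mul, intervalIntegral.integral_mul_const, fst_integral hu,
    snd_integral hu, fst_integral hu.snd]

/-- Chen's identity. -/
lemma endpointOn_trans (hab : IntervalIntegrable u volume a b)
    (hbc : IntervalIntegrable u volume b c) :
    endpointOn u a c = hmul (endpointOn u a b) (endpointOn u b c) := by
  set X := ∫ t in a..b, u t
  have hsplit : EqOn (fun t => symp (∫ s in a..t, u s) (u t))
      (fun t => symp X (u t) + symp (∫ s in b..t, u s) (u t)) [[b, c]] := fun t ht => by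
    simp only [← integral_add_adjacent_intervals hab (hbc.mono_set (uIcc_subset_uIcc_left ht)),
      symp_add_left, X]
  have hXu := intervalIntegrable_symp (p := fun _ => X) hbc continuousOn_const
  have hb := intervalIntegrable_symp_primitive hbc
  have ha_bc : IntervalIntegrable (fun t => symp (∫ s in a..t, u s) (u t)) volume b c :=
    (intervalIntegrable_congr (hsplit.mono uIoc_subset_uIcc)).2 (hXu.add hb)
  rw [endpointOn, endpointOn, endpointOn, hmul_eq, symp_add_smul_e₃_left, symp_add_smul_e₃_right,
    ← integral_add_adjacent_intervals hab hbc,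
    ← integral_add_adjacent_intervals (intervalIntegrable_symp_primitive hab) ha_bc,
    integral_congr hsplit, integral_add hXu hb, integral_symp_right X hbc]
  module

lemma endpointOn_congr (hab : a ≤ b) (h : EqOn u v (Ioc a b)) :
    endpointOn u a b = endpointOn v a b := by
  have hint : ∀ t ∈ Ioc a b, ∫ s in a..t, u s = ∫ s in a..t, v s := fun t ht =>
    integral_congr_ae (ae_of_all _ fun s hs =>
      h (Ioc_subset_Ioc_right ht.2 (by rwa [uIoc_of_le ht.1.le] at hs)))
  have hIoc : uIoc a b = Ioc a b := uIoc_of_le hab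
  rw [endpointOn, endpointOn,
    integral_congr_ae (ae_of_all _ fun t ht => h (hIoc ▸ ht)),
    integral_congr_ae (g := fun t => symp (∫ s in a..t, v s) (v t))
      (ae_of_all _ fun t ht => by rw [hint t (hIoc ▸ ht), h (hIoc ▸ ht)])]

lemma endpointOn_comp_mul_add (u : ℝ → Heis) (a b c d : ℝ) :
    endpointOn (fun t => c • u (c * t + d)) a b = endpointOn u (c * a + d) (c * b + d) := by
  have hprim : ∀ t, ∫ s in a..t, c • u (c * s + d) = ∫ s in c * a + d..c * t + d, u s :=
    fun t => by rw [intervalIntegral.integral_smul, smul_integral_comp_mul_add]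
  have hsymp (t : ℝ) : symp (∫ s in c * a + d..c * t + d, u s) (c • u (c * t + d))
      = c • symp (∫ s in c * a + d..c * t + d, u s) (u (c * t + d)) := by
    rw [symp_smul_right, smul_eq_mul]
  simp only [endpointOn, hprim, hsymp, intervalIntegral.integral_smul]
  rw [smul_integral_comp_mul_add (f := fun t => symp (∫ s in c * a + d..t, u s) (u t))]

lemma endpointOn_rot (θ : ℝ) (hu : IntervalIntegrable u volume a b) :
    endpointOn (fun t => rot θ (u t)) a b = rot θ (endpointOn u a b) := by
  have hprim : EqOn (fun t => symp (∫ s in a..t, rot θ (u s)) (rot θ (u t)))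
      (fun t => symp (∫ s in a..t, u s) (u t)) [[a, b]] := fun t ht => by
    simp only [(rot θ).intervalIntegral_comp_comm (hu.mono_set (uIcc_subset_uIcc_left ht)),
      symp_rot]
  rw [endpointOn, endpointOn, integral_congr hprim, (rot θ).intervalIntegral_comp_comm hu,
    rot_add_smul_e₃]

lemma endpointOn_const (x : Heis) (a b : ℝ) : endpointOn (fun _ => x) a b = (b - a) • x := by
  simp [endpointOn, symp_smul_left]

lemma endpointOn_eq_add_smul_e₃ (hu : IntervalIntegrable u volume a b) :
    endpointOn u a b = endpointOn (fun t => u t - (u t).2.2 • e₃) a b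
      + (∫ t in a..b, (u t).2.2) • e₃ := by
  have hu₃ : ∀ {c d : ℝ}, IntervalIntegrable u volume c d →
      IntervalIntegrable (fun t => (u t).2.2 • e₃) volume c d :=
    fun h => h.snd.snd.smul_continuousOn continuousOn_const
  have hprim : EqOn (fun t => symp (∫ s in a..t, u s - (u s).2.2 • e₃) (u t - (u t).2.2 • e₃))
      (fun t => symp (∫ s in a..t, u s) (u t)) [[a, b]] := fun t ht => by
    have hat := hu.mono_set (uIcc_subset_uIcc_left ht)
    dsimp only
    rw [integral_sub hat (hu₃ hat), intervalIntegral.integral_smul_const]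
    simp only [sub_eq_add_neg, ← neg_smul, symp_add_smul_e₃_left, symp_add_smul_e₃_right]
  rw [endpointOn, endpointOn, integral_congr hprim, integral_sub hu (hu₃ hu),
    intervalIntegral.integral_smul_const]
  module

lemma abs_endpointOn_snd_snd_le {ρ : ℝ} (hv : IntervalIntegrable v volume 0 1)
    (hhor : ∀ t, (v t).2.2 = 0) (hρ : ∀ t ∈ Icc (0:ℝ) 1, hnorm (∫ s in (0:ℝ)..t, v s) ≤ ρ) :
    |(endpointOn v 0 1).2.2| ≤ 2⁻¹ * (ρ * ∫ t in (0:ℝ)..1, hnorm (v t)) := by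
  have h₀ : (∫ t in (0:ℝ)..1, v t).2.2 = 0 := by
    rw [snd_integral hv, snd_integral hv.snd]; simp [hhor]
  simp only [endpointOn, Prod.snd_add, h₀, e₃, Prod.smul_snd, smul_eq_mul, mul_one, zero_add,
    abs_mul, abs_of_pos (by norm_num : (0:ℝ) < 2⁻¹)]
  gcongr
  calc |∫ t in (0:ℝ)..1, symp (∫ s in (0:ℝ)..t, v s) (v t)|
      ≤ ∫ t in (0:ℝ)..1, |symp (∫ s in (0:ℝ)..t, v s) (v t)| :=
        abs_integral_le_integral_abs zero_le_one
    _ ≤ ∫ t in (0:ℝ)..1, ρ * hnorm (v t) :=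
        integral_mono_on zero_le_one (intervalIntegrable_symp_primitive hv).abs
          (hv.hnorm.const_mul ρ) fun t ht =>
            (abs_symp_le _ _).trans (mul_le_mul_of_nonneg_right (hρ t ht) (hnorm_nonneg _))
    _ = ρ * ∫ t in (0:ℝ)..1, hnorm (v t) := intervalIntegral.integral_const_mul _ _

/-! ### Horizontal controls -/

def HasHorizontalControl (T : Heis) (ℓ : ℝ) : Prop :=
  ∃ u : ℝ → Heis, IntervalIntegrable u volume 0 1 ∧ (∀ t, (u t).2.2 = 0) ∧
    endpointOn u 0 1 = T ∧ ∫ t in (0:ℝ)..1, hnorm (u t) ≤ ℓ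

lemma HasHorizontalControl.mono {T : Heis} {ℓ ℓ' : ℝ} (h : HasHorizontalControl T ℓ)
    (hℓ : ℓ ≤ ℓ') : HasHorizontalControl T ℓ' :=
  let ⟨u, hu, hhor, hT, hl⟩ := h
  ⟨u, hu, hhor, hT, hl.trans hℓ⟩

lemma hasHorizontalControl_endpointOn (hab : a ≤ b) (hv : IntervalIntegrable v volume a b)
    (hhor : ∀ t, (v t).2.2 = 0) :
    HasHorizontalControl (endpointOn v a b) (∫ t in a..b, hnorm (v t)) := by
  have hv' : IntervalIntegrable v volume ((b - a) * 0 + a) ((b - a) * 1 + a) := by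
    simpa using hv
  refine ⟨fun s => (b - a) • v ((b - a) * s + a), hv'.comp_mul_add.smul (b - a),
    fun s => by simp [hhor], ?_, ?_⟩
  · simpa using endpointOn_comp_mul_add v 0 1 (b - a) a
  · simpa using (integral_hnorm_comp_mul_add v (sub_nonneg.2 hab) 0 1 a).le

noncomputable def concat (u v : ℝ → Heis) (t : ℝ) : Heis :=
  if t ≤ 2⁻¹ then (2 : ℝ) • u (2 * t) else (2 : ℝ) • v (2 * t - 1)

lemma concat_eqOn_left (u v : ℝ → Heis) :
    EqOn (concat u v) (fun t => (2 : ℝ) • u (2 * t + 0)) (Ioc 0 2⁻¹) := fun t ht => by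
  simp [concat, ht.2]

lemma concat_eqOn_right (u v : ℝ → Heis) :
    EqOn (concat u v) (fun t => (2 : ℝ) • v (2 * t + -1)) (Ioc 2⁻¹ 1) := fun t ht => by
  simp [concat, not_le.2 ht.1, sub_eq_add_neg]

lemma HasHorizontalControl.mul {X Y : Heis} {ℓ₁ ℓ₂ : ℝ} (hX : HasHorizontalControl X ℓ₁)
    (hY : HasHorizontalControl Y ℓ₂) : HasHorizontalControl (hmul X Y) (ℓ₁ + ℓ₂) := by
  obtain ⟨u, hu, huhor, rfl, hul⟩ := hX
  obtain ⟨v, hv, hvhor, rfl, hvl⟩ := hY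
  have hu' : IntervalIntegrable u volume (2 * 0 + 0) (2 * 2⁻¹ + 0) := by simpa using hu
  have hv' : IntervalIntegrable v volume (2 * 2⁻¹ + -1) (2 * 1 + -1) := by norm_num; exact hv
  have hL : EqOn (concat u v) _ (Ι 0 2⁻¹) := uIoc_of_le (by norm_num : (0:ℝ) ≤ 2⁻¹) ▸
    concat_eqOn_left u v
  have hR : EqOn (concat u v) _ (Ι 2⁻¹ 1) := uIoc_of_le (by norm_num : (2⁻¹:ℝ) ≤ 1) ▸
    concat_eqOn_right u v
  have hwL : IntervalIntegrable (concat u v) volume 0 2⁻¹ :=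
    (intervalIntegrable_congr hL).2 (hu'.comp_mul_add.smul (2 : ℝ))
  have hwR : IntervalIntegrable (concat u v) volume 2⁻¹ 1 :=
    (intervalIntegrable_congr hR).2 (hv'.comp_mul_add.smul (2 : ℝ))
  refine ⟨concat u v, hwL.trans hwR, fun t => by unfold concat; split_ifs <;> simp [huhor, hvhor],
    ?_, ?_⟩
  · rw [endpointOn_trans hwL hwR, endpointOn_congr (by norm_num) (concat_eqOn_left u v),
      endpointOn_congr (by norm_num) (concat_eqOn_right u v), endpointOn_comp_mul_add,
      endpointOn_comp_mul_add]
    norm_num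
  · rw [← integral_add_adjacent_intervals hwL.hnorm hwR.hnorm,
      integral_congr_ae (ae_of_all _ fun t ht => congrArg hnorm (hL ht)),
      integral_congr_ae (ae_of_all _ fun t ht => congrArg hnorm (hR ht)),
      integral_hnorm_comp_mul_add u zero_le_two, integral_hnorm_comp_mul_add v zero_le_two]
    norm_num
    exact add_le_add hul hvl

/-! ### Circular arcs -/

lemma HasHorizontalControl.map_rot {T : Heis} {ℓ : ℝ} (h : HasHorizontalControl T ℓ) (θ : ℝ) :
    HasHorizontalControl (rot θ T) ℓ :=
  let ⟨u, hu, hhor, hT, hl⟩ := h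
  ⟨fun t => rot θ (u t), ⟨(rot θ).integrable_comp hu.1, (rot θ).integrable_comp hu.2⟩,
    fun t => by simp [hhor], by rw [endpointOn_rot θ hu, hT], by simpa only [hnorm_rot] using hl⟩

noncomputable def arc (y : Heis) (α t : ℝ) : Heis := α • perp (rot (α * t) y)

lemma continuous_arc (y : Heis) (α : ℝ) : Continuous (arc y α) := by
  unfold arc; simp only [perp, rot_apply]; fun_prop

lemma hasDerivAt_rot_mul_apply (α : ℝ) (y : Heis) (t : ℝ) :
    HasDerivAt (fun t => rot (α * t) y) (arc y α t) t := by
  have hc : HasDerivAt (fun t => cos (α * t)) (-sin (α * t) * α) t := by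
    simpa using ((hasDerivAt_id t).const_mul α).cos
  have hs : HasDerivAt (fun t => sin (α * t)) (cos (α * t) * α) t := by
    simpa using ((hasDerivAt_id t).const_mul α).sin
  have h := ((hc.mul_const y.1).sub (hs.mul_const y.2.1)).prodMk
    (((hs.mul_const y.1).add (hc.mul_const y.2.1)).prodMk (hasDerivAt_const t y.2.2))
  refine h.congr_deriv ?_
  ext <;> simp [arc, perp] <;> ring

lemma integral_arc (y : Heis) (α t : ℝ) : ∫ s in (0:ℝ)..t, arc y α s = rot (α * t) y - y := by
  rw [integral_eq_sub_of_hasDerivAt (fun s _ => hasDerivAt_rot_mul_apply α y s)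
    ((continuous_arc y α).intervalIntegrable 0 t)]
  simp

lemma symp_integral_arc (y : Heis) (α t : ℝ) :
    symp (∫ s in (0:ℝ)..t, arc y α s) (arc y α t) = α * (hnorm y ^ 2 * (1 - cos (α * t))) := by
  rw [integral_arc, arc, symp_smul_right, hnorm_sq]
  simp only [symp, perp, rot_apply, Prod.fst_sub, Prod.snd_sub]
  linear_combination α * (y.1 ^ 2 + y.2.1 ^ 2) * sin_sq_add_cos_sq (α * t)

lemma endpointOn_arc (y : Heis) (α : ℝ) :
    endpointOn (arc y α) 0 1 = rot α y - y + (2⁻¹ * (hnorm y ^ 2 * (α - sin α))) • e₃ := by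
  have hderiv (t : ℝ) : HasDerivAt (fun t => hnorm y ^ 2 * (α * t - sin (α * t)))
      (α * (hnorm y ^ 2 * (1 - cos (α * t)))) t := by
    have := ((hasDerivAt_id t).const_mul α).sub ((hasDerivAt_id t).const_mul α).sin
    refine (this.const_mul (hnorm y ^ 2)).congr_deriv ?_
    simp only [id, mul_one]; ring
  rw [endpointOn, integral_arc, mul_one]
  simp only [symp_integral_arc]
  have hcont : Continuous fun t => α * (hnorm y ^ 2 * (1 - cos (α * t))) := by fun_prop
  rw [integral_eq_sub_of_hasDerivAt (fun t _ => hderiv t) (hcont.intervalIntegrable 0 1)]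
  simp

lemma hasHorizontalControl_arc (y : Heis) (α : ℝ) :
    HasHorizontalControl (rot α y - y + (2⁻¹ * (hnorm y ^ 2 * (α - sin α))) • e₃)
      (|α| * hnorm y) := by
  refine ⟨arc y α, (continuous_arc y α).intervalIntegrable 0 1, fun t => by simp [arc, perp],
    endpointOn_arc y α, le_of_eq ?_⟩
  simp only [arc, hnorm_smul, hnorm_perp, hnorm_rot]
  simp

/-- Rotating a horizontal path about the origin and closing the gap by a circular arc centred at
the origin changes its area at a cost inversely proportional to the radius. -/
lemma HasHorizontalControl.add_smul_e₃ {X : Heis} {ℓ : ℝ} (hX : HasHorizontalControl X ℓ)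
    (hR : 0 < hnorm X) (h : ℝ) : HasHorizontalControl (X + h • e₃) (ℓ + 2 * |h| / hnorm X) := by
  set R := hnorm X
  set α := 2 * h / R ^ 2
  have hαR : R ^ 2 * α = 2 * h := by simp only [α]; field_simp
  have hend : hmul (rot (-α) X) (rot α (rot (-α) X) - rot (-α) X
      + (2⁻¹ * (hnorm (rot (-α) X) ^ 2 * (α - sin α))) • e₃) = X + h • e₃ := by
    rw [rot_rot_neg, hnorm_rot, hmul_eq, symp_add_smul_e₃_right, symp_sub_right, symp_rot_self,
      symp_self, sin_neg]
    calc _ = X + (2⁻¹ * (R ^ 2 * α)) • e₃ := by module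
      _ = X + h • e₃ := by rw [hαR]; ring_nf
  have hlen : ℓ + |α| * hnorm (rot (-α) X) = ℓ + 2 * |h| / R := by
    rw [hnorm_rot, abs_div, abs_mul, abs_two, abs_of_pos (by positivity : 0 < R ^ 2)]
    field_simp
    ring
  simpa only [hend, hlen] using (hX.map_rot (-α)).mul (hasHorizontalControl_arc (rot (-α) X) α)

lemma hasHorizontalControl_smul_e₃ (ζ : ℝ) : HasHorizontalControl (ζ • e₃) (√(4 * π * |ζ|)) := by
  obtain ⟨σ, hσ, hζ⟩ : ∃ σ : ℝ, (σ = 1 ∨ σ = -1) ∧ ζ = σ * |ζ| := by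
    rcases le_or_gt 0 ζ with h | h
    · exact ⟨1, Or.inl rfl, by rw [abs_of_nonneg h, one_mul]⟩
    · exact ⟨-1, Or.inr rfl, by rw [abs_of_neg h]; ring⟩
  have hcos : cos (2 * π * σ) = 1 := by rcases hσ with rfl | rfl <;> simp
  have hsin : sin (2 * π * σ) = 0 := by rcases hσ with rfl | rfl <;> simp
  have habs : |2 * π * σ| = 2 * π := by rcases hσ with rfl | rfl <;> simp [pi_pos.le]
  -- once around the circle of radius `r` about the origin, in the direction of the sign `σ` of `ζ`
  set r := √(|ζ| / π)
  have hr : hnorm (r, 0, 0) = r := by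
    rw [hnorm, zero_pow two_ne_zero, add_zero, sqrt_sq (sqrt_nonneg _)]
  have hr2 : r ^ 2 = |ζ| / π := sq_sqrt (by positivity)
  have hE : rot (2 * π * σ) (r, 0, 0) - (r, 0, 0)
      + (2⁻¹ * (hnorm (r, 0, 0) ^ 2 * (2 * π * σ - sin (2 * π * σ)))) • e₃ = ζ • e₃ := by
    rw [hr, hr2, hsin]
    ext <;> simp [hcos, hsin, e₃]
    field_simp
    linarith
  have hL : |2 * π * σ| * hnorm (r, 0, 0) = √(4 * π * |ζ|) := by
    rw [habs, hr, show 4 * π * |ζ| = (2 * π) ^ 2 * (|ζ| / π) by field_simp; ring,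
      sqrt_mul (sq_nonneg _), sqrt_sq (by positivity)]
  simpa only [hE, hL] using hasHorizontalControl_arc (r, 0, 0) (2 * π * σ)

lemma hasHorizontalControl_hnorm_add_sqrt (T : Heis) :
    HasHorizontalControl T (hnorm T + √(4 * π * |T.2.2|)) := by
  have hseg : HasHorizontalControl (T.1, T.2.1, 0) (hnorm T) :=
    ⟨fun _ => (T.1, T.2.1, 0), intervalIntegrable_const, fun _ => rfl,
      by rw [endpointOn_const, sub_zero, one_smul], by simp [hnorm]⟩
  convert hseg.mul (hasHorizontalControl_smul_e₃ T.2.2) using 1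
  ext <;> simp [hmul_eq, symp, e₃]

/-! ### The horizontal distance -/

def horizLengths (T : Heis) : Set ℝ :=
  {l : ℝ | ∃ u : ℝ → Heis, IntervalIntegrable u volume 0 1 ∧
    (∀ᵐ t ∂(volume.restrict (Set.Icc (0:ℝ) 1)), (u t).2.2 = 0) ∧
    hEndpoint u = T ∧
    l = ∫ t in (0:ℝ)..1, Real.sqrt ((u t).1 ^ 2 + (u t).2.1 ^ 2)}

noncomputable def horizDist (T : Heis) : ℝ := sInf (horizLengths T)

lemma horizLengths_bddBelow (T : Heis) : BddBelow (horizLengths T) :=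
  ⟨0, by rintro l ⟨u, -, -, -, rfl⟩; exact integral_nonneg zero_le_one fun t _ => hnorm_nonneg _⟩

lemma HasHorizontalControl.mem_horizLengths {T : Heis} {ℓ : ℝ} (h : HasHorizontalControl T ℓ) :
    ∃ l ∈ horizLengths T, l ≤ ℓ :=
  let ⟨u, hu, hhor, hT, hl⟩ := h
  ⟨_, ⟨u, hu, ae_of_all _ hhor, by rw [hEndpoint_eq_endpointOn, hT], rfl⟩, hl⟩

lemma HasHorizontalControl.horizDist_le {T : Heis} {ℓ : ℝ} (h : HasHorizontalControl T ℓ) :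
    horizDist T ≤ ℓ :=
  let ⟨_, hl, hle⟩ := h.mem_horizLengths
  (csInf_le (horizLengths_bddBelow T) hl).trans hle

lemma hasHorizontalControl_add_smul_e₃_of_two_le {τ : ℝ} (hτ : τ ∈ Icc (0:ℝ) 1)
    (hv : IntervalIntegrable v volume 0 1) (hhor : ∀ t, (v t).2.2 = 0)
    (h2 : 2 ≤ hnorm (∫ s in (0:ℝ)..τ, v s)) (h : ℝ) :
    HasHorizontalControl (endpointOn v 0 1 + h • e₃) ((∫ t in (0:ℝ)..1, hnorm (v t)) + |h|) := by
  have hv₁ : IntervalIntegrable v volume 0 τ :=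
    hv.mono_set (uIcc_subset_uIcc_left (Icc_subset_uIcc hτ))
  have hv₂ : IntervalIntegrable v volume τ 1 :=
    hv.mono_set (uIcc_subset_uIcc_right (Icc_subset_uIcc hτ))
  have hR : hnorm (endpointOn v 0 τ) = hnorm (∫ s in (0:ℝ)..τ, v s) := hnorm_add_smul_e₃ _ _
  have hcost : 2 * |h| / hnorm (endpointOn v 0 τ) ≤ |h| := by
    rw [div_le_iff₀ (by linarith), hR]; nlinarith [abs_nonneg h]
  have := ((hasHorizontalControl_endpointOn hτ.1 hv₁ hhor).add_smul_e₃ (by linarith) h).mul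
    (hasHorizontalControl_endpointOn hτ.2 hv₂ hhor)
  rw [hmul_add_smul_e₃, ← endpointOn_trans hv₁ hv₂] at this
  refine this.mono ?_
  rw [← integral_add_adjacent_intervals hv₁.hnorm hv₂.hnorm]
  linarith

lemma le_of_le_two_add_sqrt {D s : ℝ} (hD : 100 ≤ D) (h : D ≤ 2 + √(4 * π * s)) : D ≤ s := by
  rcases le_or_gt s 0 with hs | hs
  · rw [sqrt_eq_zero_of_nonpos (by nlinarith [pi_pos])] at h; linarith
  have hr := sq_sqrt (by positivity : 0 ≤ 4 * π * s)
  nlinarith [mul_nonneg (by linarith : 0 ≤ 2 + √(4 * π * s) - D)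
    (by linarith [sqrt_nonneg (4 * π * s)] : 0 ≤ √(4 * π * s) + D - 2),
    mul_lt_mul_of_pos_right pi_lt_d2 hs]

lemma horizDist_le_integral {T : Heis} (hT : 100 ≤ horizDist T) {u : ℝ → Heis}
    (hu : IntervalIntegrable u volume 0 1) (hE : endpointOn u 0 1 = T) :
    horizDist T ≤ ∫ t in (0:ℝ)..1, (hnorm (u t) + |(u t).2.2|) := by
  set v := fun t => u t - (u t).2.2 • e₃
  set h := ∫ t in (0:ℝ)..1, (u t).2.2
  have hv : IntervalIntegrable v volume 0 1 :=
    hu.sub (hu.snd.snd.smul_continuousOn continuousOn_const)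
  have hvhor : ∀ t, (v t).2.2 = 0 := fun t => by simp [v, e₃]
  have hlen : ∫ t in (0:ℝ)..1, hnorm (v t) = ∫ t in (0:ℝ)..1, hnorm (u t) := by
    simp only [v, sub_eq_add_neg, ← neg_smul, hnorm_add_smul_e₃]
  have hhA : |h| ≤ ∫ t in (0:ℝ)..1, |(u t).2.2| := abs_integral_le_integral_abs zero_le_one
  rw [endpointOn_eq_add_smul_e₃ hu] at hE
  subst hE
  rw [integral_add hu.hnorm hu.snd.snd.abs, ← hlen]
  by_cases hfar : ∃ τ ∈ Icc (0:ℝ) 1, 2 ≤ hnorm (∫ s in (0:ℝ)..τ, v s)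
  · obtain ⟨τ, hτ, h2⟩ := hfar
    exact (hasHorizontalControl_add_smul_e₃_of_two_le hτ hv hvhor h2 h).horizDist_le.trans
      (by linarith)
  · simp only [not_exists, not_and, not_le] at hfar
    have hplanar : hnorm (endpointOn v 0 1 + h • e₃) ≤ 2 := by
      rw [hnorm_add_smul_e₃, endpointOn, hnorm_add_smul_e₃]
      exact (hfar 1 ⟨zero_le_one, le_rfl⟩).le
    have harea := abs_endpointOn_snd_snd_le hv hvhor fun t ht => (hfar t ht).le
    have hvert : |(endpointOn v 0 1 + h • e₃).2.2| ≤
        (∫ t in (0:ℝ)..1, hnorm (v t)) + ∫ t in (0:ℝ)..1, |(u t).2.2| := by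
      simp only [Prod.snd_add, e₃, Prod.smul_snd, smul_eq_mul, mul_one]
      linarith [abs_add_le (endpointOn v 0 1).2.2 h]
    refine le_of_le_two_add_sqrt hT ?_
    calc _ ≤ _ := (hasHorizontalControl_hnorm_add_sqrt _).horizDist_le
      _ ≤ _ := by gcongr

def controlLengths (nrm : Heis → ℝ) (T : Heis) : Set ℝ :=
  {l : ℝ | ∃ u : ℝ → Heis, IntervalIntegrable u volume 0 1 ∧
    hEndpoint u = T ∧
    l = ∫ t in (0:ℝ)..1, nrm (u t)}

lemma horizLengths_subset_controlLengths (T : Heis) :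
    horizLengths T ⊆ controlLengths (fun x => hnorm x + |x.2.2|) T := by
  rintro l ⟨u, hu, hhor, hE, rfl⟩
  refine ⟨u, hu, hE, integral_congr_ae ?_⟩
  filter_upwards [(ae_restrict_iff' measurableSet_Icc).1 hhor] with t ht hmem
  rw [ht (Ioc_subset_Icc_self (uIoc_of_le (zero_le_one' ℝ) ▸ hmem)), abs_zero, add_zero]
  rfl

end Heisenberg

open Heisenberg in
/-- for the `ℓ¹`-type norm `‖u‖ = √(u₁²+u₂²) + |u₃|`, there is `r₀ > 0`
such that `d_F(p,q) = d(p,q)` whenever `d(p,q) ≥ r₀`. -/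
theorem stmt_17 :
    ∃ r₀ > (0:ℝ), ∀ p q : Heis, r₀ ≤ dH p q →
      dFin (fun u => Real.sqrt (u.1 ^ 2 + u.2.1 ^ 2) + |u.2.2|) p q = dH p q := by
  refine ⟨100, by norm_num, fun p q hpq => ?_⟩
  set T := hmul (-p) q
  change 100 ≤ horizDist T at hpq
  change sInf (controlLengths (fun x => hnorm x + |x.2.2|) T) = horizDist T
  apply le_antisymm
  · obtain ⟨l, hl, -⟩ := (hasHorizontalControl_hnorm_add_sqrt T).mem_horizLengths
    refine csInf_le_csInf ⟨0, ?_⟩ ⟨l, hl⟩ (horizLengths_subset_controlLengths T)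
    rintro l ⟨u, -, -, rfl⟩
    exact integral_nonneg zero_le_one fun t _ => add_nonneg (hnorm_nonneg _) (abs_nonneg _)
  · refine le_csInf ⟨_, fun _ => T, intervalIntegrable_const, ?_, rfl⟩ ?_
    · rw [hEndpoint_eq_endpointOn, endpointOn_const, sub_zero, one_smul]
    · rintro l ⟨u, hu, hE, rfl⟩
      exact horizDist_le_integral hpq hu (by rw [← hEndpoint_eq_endpointOn, hE])
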